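/- For i ∈ ℤ define the spike map π_i on subsets of ℤ by π_i(A) = (A \ {i}) ∪ {i−1, i+1} if i ∈ A and π_i(A) = A \ {i} if i ∉ A, and define the dual spike map π̃_i on subsets of ℤ by π̃_i(F) = ⋃_{j ∈ F} π̃_i({j}), where π̃_i({i}) = ∅, π̃_i({j}) = {i, j} if j ∈ {i−1, i+1}, and π̃_i({j}) = {j} otherwise. Then for every i ∈ ℤ and all subsets A, F of ℤ: π_i(A) ∩ F ≠ ∅ if and only if A ∩ π̃_i(F) ≠ ∅. -/
import Mathlib


open Classical in
/-- The spike map `π_i`: neuron `i` becomes quiescent and, if `i` was active, its two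
nearest neighbours `i-1` and `i+1` become active. -/
noncomputable def spikeMap (i : ℤ) (A : Set ℤ) : Set ℤ :=
  if i ∈ A then (A \ {i}) ∪ {i - 1, i + 1} else A \ {i}

/-- The dual spike map on singletons. -/
noncomputable def dualSpikeMapSingle (i j : ℤ) : Set ℤ :=
  if j = i then ∅ else if j = i - 1 ∨ j = i + 1 then {i, j} else {j}

/-- The dual spike map `π̃_i`, extended additively to arbitrary sets. -/
noncomputable def dualSpikeMap (i : ℤ) (F : Set ℤ) : Set ℤ :=
  ⋃ j ∈ F, dualSpikeMapSingle i j

lemma mem_spikeMap_iff (i : ℤ) (A : Set ℤ) (x : ℤ) :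
    x ∈ spikeMap i A ↔ ∃ a ∈ A, a ∈ dualSpikeMapSingle i x := by
  unfold spikeMap dualSpikeMapSingle
  by_cases hx : x = i
  · subst hx
    simp only [if_pos rfl, Set.mem_empty_iff_false, and_false, exists_false, iff_false]
    by_cases hi : x ∈ A <;> simp [hi] <;> omega
  · rw [if_neg hx]
    by_cases hnb : x = i - 1 ∨ x = i + 1
    · rw [if_pos hnb]
      by_cases hi : i ∈ A
      · rw [if_pos hi]
        constructor
        · rintro (⟨hxa, -⟩ | h)
          · exact ⟨x, hxa, Or.inr rfl⟩
          · exact ⟨i, hi, Or.inl rfl⟩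
        · rintro ⟨a, ha, rfl | rfl⟩
          · rcases hnb with rfl | rfl <;> simp
          · exact Or.inl ⟨ha, hx⟩
      · rw [if_neg hi]
        constructor
        · rintro ⟨hxa, -⟩
          exact ⟨x, hxa, Or.inr rfl⟩
        · rintro ⟨a, ha, rfl | rfl⟩
          · exact absurd ha hi
          · exact ⟨ha, hx⟩
    · rw [if_neg hnb]
      by_cases hi : i ∈ A
      · rw [if_pos hi]
        constructor
        · rintro (⟨hxa, -⟩ | h)
          · exact ⟨x, hxa, rfl⟩
          · exact absurd h (by simpa using hnb)
        · rintro ⟨a, ha, rfl⟩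
          exact Or.inl ⟨ha, hx⟩
      · rw [if_neg hi]
        constructor
        · rintro ⟨hxa, -⟩
          exact ⟨x, hxa, rfl⟩
        · rintro ⟨a, ha, rfl⟩
          exact ⟨ha, hx⟩

/-- Duality relation between the spike map and the dual spike map:
`π_i(A) ∩ F ≠ ∅ ↔ A ∩ π̃_i(F) ≠ ∅`. -/
theorem spikeMap_dual (i : ℤ) (A F : Set ℤ) :
    (spikeMap i A ∩ F).Nonempty ↔ (A ∩ dualSpikeMap i F).Nonempty := by
  constructor
  · rintro ⟨x, hxs, hxF⟩
    obtain ⟨a, haA, ha⟩ := (mem_spikeMap_iff i A x).1 hxs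
    exact ⟨a, haA, Set.mem_biUnion hxF ha⟩
  · rintro ⟨a, haA, ha⟩
    obtain ⟨x, hxF, hax⟩ := Set.mem_iUnion₂.1 ha
    exact ⟨x, (mem_spikeMap_iff i A x).2 ⟨a, haA, hax⟩, hxF⟩
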